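/- arXiv:1404.4918 — 3 statements merged into one kernel-verified Lean document; each statement's English description precedes it below -/
import Mathlib

section
/- (Hasse–Minkowski for conics) Let a, b ∈ ℚˣ. The equation ax² + by² = 1 has a solution x, y ∈ ℚ if and only if it has a solution in ℝ and in ℚ_p for every prime p. -/
/-!
Legendre's descent. Scaling by squares reduces to squarefree integers `a, b` with `|a| ≤ |b|`.
Over a field `K`, the conic `a x² + b y² = 1` has a point iff `b` is a norm from `K(√a)`.
For `p ∣ b`, a primitive `ℤ_p`-point of `a X² + b Y² = Z²` reduced mod `p` shows that `a` is a
square mod `p`, so by the Chinese remainder theorem `t² ≡ a (mod b)` for some `|t| ≤ |b|/2`.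
Writing `b b' = t² - a = N(t + √a)`, multiplicativity of the norm makes the conics `(a, b)` and
`(a, b')` solvable over the same fields of characteristic zero, and `|b'| < |b|`. Induction on
`|a| + |b|` ends at `|a| = |b| = 1`, where only the real place can obstruct.
-/

def ConicSolvable (K : Type*) [Field K] (a b : K) : Prop :=
  ∃ x y : K, a * x ^ 2 + b * y ^ 2 = 1

section Field

variable {K L : Type*} [Field K] [Field L] {a b b' t : K}

theorem ConicSolvable.map (f : K →+* L) (h : ConicSolvable K a b) :
    ConicSolvable L (f a) (f b) := by
  obtain ⟨x, y, hxy⟩ := h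
  exact ⟨f x, f y, by simpa using congrArg f hxy⟩

theorem conicSolvable_comm : ConicSolvable K a b ↔ ConicSolvable K b a := by
  constructor <;> rintro ⟨x, y, h⟩ <;> exact ⟨y, x, by linear_combination h⟩

theorem conicSolvable_mul_sq_right {d : K} (hd : d ≠ 0) :
    ConicSolvable K a (b * d ^ 2) ↔ ConicSolvable K a b := by
  constructor
  · rintro ⟨x, y, h⟩
    exact ⟨x, d * y, by linear_combination h⟩
  · rintro ⟨x, y, h⟩
    refine ⟨x, y / d, ?_⟩
    field_simp
    linear_combination h

theorem conicSolvable_mul_sq {r s : K} (hr : r ≠ 0) (hs : s ≠ 0) :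
    ConicSolvable K (a * r ^ 2) (b * s ^ 2) ↔ ConicSolvable K a b := by
  rw [conicSolvable_mul_sq_right hs, conicSolvable_comm, conicSolvable_mul_sq_right hr,
    conicSolvable_comm]

theorem conicSolvable_of_isSquare (ha : a ≠ 0) (h : IsSquare a) : ConicSolvable K a b := by
  obtain ⟨r, rfl⟩ := h
  have hr : r ≠ 0 := by rintro rfl; simp at ha
  exact ⟨r⁻¹, 0, by field_simp; ring⟩

/-- `b` is a norm from `K(√a)`. -/
theorem conicSolvable_iff_exists_sq_sub_mul_sq (h2 : (2 : K) ≠ 0) (hb : b ≠ 0) :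
    ConicSolvable K a b ↔ ∃ u v : K, u ^ 2 - a * v ^ 2 = b := by
  constructor
  · rintro ⟨x, y, h⟩
    rcases eq_or_ne y 0 with rfl | hy
    · refine ⟨(1 + b) / 2, x * ((b - 1) / 2), ?_⟩
      field_simp
      linear_combination (-(b - 1) ^ 2) * h
    · refine ⟨1 / y, x / y, ?_⟩
      field_simp
      linear_combination -h
  · rintro ⟨u, v, h⟩
    rcases eq_or_ne u 0 with rfl | hu
    · have ha : a ≠ 0 := by rintro rfl; exact hb (by simpa using h.symm)
      have hv : v ≠ 0 := by rintro rfl; exact hb (by simpa using h.symm)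
      refine ⟨(1 + 1 / a) / 2, (1 / a - 1) / (2 * v), ?_⟩
      field_simp
      linear_combination (-(a - 1) ^ 2) * h
    · refine ⟨v / u, 1 / u, ?_⟩
      field_simp
      linear_combination -h

/-- Norms from `K(√a)` are multiplicative: `b b' = N(t + √a)`. -/
theorem exists_sq_sub_mul_sq_of_mul_eq (hb : b ≠ 0) (h : b * b' = t ^ 2 - a)
    (hnorm : ∃ u v : K, u ^ 2 - a * v ^ 2 = b) : ∃ u v : K, u ^ 2 - a * v ^ 2 = b' := by
  obtain ⟨u, v, huv⟩ := hnorm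
  refine ⟨(t * u + a * v) / b, (t * v + u) / b, ?_⟩
  field_simp
  linear_combination (t ^ 2 - a) * huv - b * h

theorem conicSolvable_iff_of_mul_eq_sq_sub (h2 : (2 : K) ≠ 0) (hb : b ≠ 0) (hb' : b' ≠ 0)
    (h : b * b' = t ^ 2 - a) : ConicSolvable K a b ↔ ConicSolvable K a b' := by
  rw [conicSolvable_iff_exists_sq_sub_mul_sq h2 hb, conicSolvable_iff_exists_sq_sub_mul_sq h2 hb']
  exact ⟨exists_sq_sub_mul_sq_of_mul_eq hb h,
    exists_sq_sub_mul_sq_of_mul_eq (t := t) hb' (by linear_combination h)⟩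

end Field

section Padic

variable {p : ℕ} [Fact p.Prime]

theorem PadicInt.dvd_iff_toZMod_eq_zero (z : ℤ_[p]) : (p : ℤ_[p]) ∣ z ↔ toZMod z = 0 := by
  rw [← RingHom.mem_ker, ker_toZMod, maximalIdeal_eq_span_p, Ideal.mem_span_singleton]

theorem PadicInt.isUnit_iff_toZMod_ne_zero (z : ℤ_[p]) : IsUnit z ↔ toZMod z ≠ 0 := by
  rw [ne_eq, ← RingHom.mem_ker, ker_toZMod, IsLocalRing.mem_maximalIdeal, mem_nonunits_iff,
    not_not]

theorem PadicInt.isSquare_toZMod_of_add_mul_sq_eq_sq {a b X Y Z : ℤ_[p]}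
    (hb : (p : ℤ_[p]) ∣ b) (hb2 : ¬(p : ℤ_[p]) ^ 2 ∣ b)
    (hprim : IsUnit X ∨ IsUnit Y ∨ IsUnit Z) (h : a * X ^ 2 + b * Y ^ 2 = Z ^ 2) :
    IsSquare (toZMod a) := by
  have hmod : toZMod a * toZMod X ^ 2 = toZMod Z ^ 2 := by
    simpa [(dvd_iff_toZMod_eq_zero b).1 hb] using congrArg toZMod h
  by_cases hX : toZMod X = 0
  -- then `p ∣ X, Z`, so `p² ∣ b Y²` with `Y` a unit
  · have hZ : toZMod Z = 0 := by simpa [hX] using hmod.symm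
    have hY : IsUnit Y := by
      simpa [isUnit_iff_toZMod_ne_zero, hX, hZ] using hprim
    obtain ⟨X', rfl⟩ := (dvd_iff_toZMod_eq_zero X).2 hX
    obtain ⟨Z', rfl⟩ := (dvd_iff_toZMod_eq_zero Z).2 hZ
    refine absurd ((hY.pow 2).dvd_mul_right.1 ⟨Z' ^ 2 - a * X' ^ 2, ?_⟩) hb2
    linear_combination h
  · exact ⟨toZMod Z / toZMod X, by field_simp; linear_combination hmod⟩

theorem Padic.exists_primitive_scaling (x y : ℚ_[p]) :
    ∃ X Y Z : ℤ_[p], (X : ℚ_[p]) = x * Z ∧ (Y : ℚ_[p]) = y * Z ∧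
      (IsUnit X ∨ IsUnit Y ∨ IsUnit Z) := by
  classical
  obtain ⟨w, hw, hmax⟩ := ({x, y, 1} : Finset ℚ_[p]).exists_max_image norm (by simp)
  simp only [Finset.mem_insert, Finset.mem_singleton, forall_eq_or_imp, forall_eq] at hw hmax
  obtain ⟨hx, hy, h1⟩ := hmax
  have hw0 : w ≠ 0 := by rintro rfl; norm_num at h1
  have hle (v : ℚ_[p]) (hv : ‖v‖ ≤ ‖w‖) : ‖v / w‖ ≤ 1 := by
    rw [norm_div]; exact div_le_one_of_le₀ hv (norm_nonneg _)
  let X : ℤ_[p] := ⟨x / w, hle x hx⟩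
  let Y : ℤ_[p] := ⟨y / w, hle y hy⟩
  let Z : ℤ_[p] := ⟨1 / w, hle 1 h1⟩
  refine ⟨X, Y, Z, by simp [X, Z, div_eq_mul_inv], by simp [Y, Z, div_eq_mul_inv], ?_⟩
  rw [PadicInt.isUnit_iff, PadicInt.isUnit_iff, PadicInt.isUnit_iff, PadicInt.norm_def,
    PadicInt.norm_def, PadicInt.norm_def]
  rcases hw with rfl | rfl | rfl <;> simp [X, Y, Z, hw0]

theorem isSquare_intCast_zmod_of_conicSolvable_padic {a b : ℤ} (hb : (p : ℤ) ∣ b)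
    (hb2 : ¬(p : ℤ) ^ 2 ∣ b) (h : ConicSolvable ℚ_[p] a b) : IsSquare (a : ZMod p) := by
  obtain ⟨x, y, hxy⟩ := h
  obtain ⟨X, Y, Z, hX, hY, hprim⟩ := Padic.exists_primitive_scaling x y
  have hXYZ : (a : ℤ_[p]) * X ^ 2 + b * Y ^ 2 = Z ^ 2 := by
    apply PadicInt.ext
    push_cast [hX, hY]
    linear_combination (Z : ℚ_[p]) ^ 2 * hxy
  simpa using PadicInt.isSquare_toZMod_of_add_mul_sq_eq_sq
    (by simpa using (PadicInt.pow_p_dvd_int_iff 1 b).2 (by simpa using hb))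
    (by rwa [PadicInt.pow_p_dvd_int_iff]) hprim hXYZ

end Padic

theorem ZMod.isSquare_intCast_mul {m n : ℕ} (hmn : m.Coprime n) {a : ℤ}
    (hm : IsSquare (a : ZMod m)) (hn : IsSquare (a : ZMod n)) : IsSquare (a : ZMod (m * n)) := by
  obtain ⟨r, hr⟩ := hm
  obtain ⟨s, hs⟩ := hn
  refine ⟨(chineseRemainder hmn).symm (r, s), (chineseRemainder hmn).injective ?_⟩
  simpa using Prod.ext hr hs

theorem ZMod.isSquare_intCast_of_squarefree {n : ℕ} (hn : Squarefree n) (a : ℤ)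
    (h : ∀ p : ℕ, p.Prime → p ∣ n → IsSquare (a : ZMod p)) : IsSquare (a : ZMod n) := by
  induction n using Nat.recOnPosPrimePosCoprime with
  | prime_pow p k hp hk =>
    obtain rfl : k = 1 := ((Nat.squarefree_pow_iff hp.ne_one hk.ne').1 hn).2
    rw [pow_one]
    exact h p hp (pow_one p).symm.dvd
  | zero => exact absurd hn not_squarefree_zero
  | one => exact ⟨0, Subsingleton.elim _ _⟩
  | coprime m k _ _ hmk ihm ihk =>
    obtain ⟨-, hm, hk⟩ := Nat.squarefree_mul_iff.1 hn
    exact isSquare_intCast_mul hmk (ihm hm fun p hp hpm => h p hp (hpm.mul_right k))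
      (ihk hk fun p hp hpk => h p hp (hpk.mul_left m))

theorem Int.exists_dvd_sq_sub_of_isSquare {a b : ℤ} (hb : b ≠ 0)
    (h : IsSquare (a : ZMod b.natAbs)) : ∃ t : ℤ, b ∣ t ^ 2 - a ∧ 2 * |t| ≤ |b| := by
  have : NeZero b.natAbs := ⟨natAbs_ne_zero.2 hb⟩
  obtain ⟨r, hr⟩ := h
  refine ⟨r.valMinAbs, natAbs_dvd.1 ((ZMod.intCast_zmod_eq_zero_iff_dvd _ _).1 ?_), ?_⟩
  · push_cast [ZMod.coe_valMinAbs, hr]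
    ring
  · have := r.natAbs_valMinAbs_le
    rw [abs_eq_natAbs, abs_eq_natAbs]
    omega

theorem Int.abs_lt_of_mul_eq_sq_sub {a b b' t : ℤ} (h : b * b' = t ^ 2 - a)
    (ht : 2 * |t| ≤ |b|) (ha : |a| ≤ |b|) (hb : 2 ≤ |b|) : |b'| < |b| := by
  have hprod : |b| * |b'| ≤ |t| * |t| + |a| := by
    rw [← abs_mul, h, ← abs_mul, ← sq]
    exact abs_sub _ _
  nlinarith [abs_nonneg t, abs_nonneg b']

theorem Int.sq_mul_squarefree (n : ℤ) : ∃ c k : ℤ, k ^ 2 * c = n ∧ Squarefree c := by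
  obtain ⟨c, k, hck, hc⟩ := Nat.sq_mul_squarefree n.natAbs
  rcases natAbs_eq n with hn | hn
  · exact ⟨c, k, by rw [hn, ← hck]; push_cast; ring, squarefree_natCast.2 hc⟩
  · exact ⟨-c, k, by rw [hn, ← hck]; push_cast; ring, squarefree_natAbs.1 (by simpa using hc)⟩

theorem Rat.exists_squarefree_mul_sq {a : ℚ} (ha : a ≠ 0) :
    ∃ (c : ℤ) (r : ℚ), Squarefree c ∧ r ≠ 0 ∧ a = c * r ^ 2 := by
  obtain ⟨c, k, hck, hc⟩ := Int.sq_mul_squarefree (a.num * a.den)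
  have hk : k ≠ 0 := by
    rintro rfl
    simp [ha] at hck
  refine ⟨c, k / a.den, hc, div_ne_zero (by exact_mod_cast hk) (by simp), ?_⟩
  have hnum : (a.num : ℚ) = a * a.den := (Rat.mul_den_eq_num a).symm
  have hck' : (k : ℚ) ^ 2 * c = a.num * a.den := by exact_mod_cast hck
  field_simp
  linear_combination -hck' - a.den * hnum

def LocallySolvable (a b : ℚ) : Prop :=
  ConicSolvable ℝ a b ∧ ∀ (p : ℕ) [Fact p.Prime], ConicSolvable ℚ_[p] a b

theorem LocallySolvable.congr {a b c d : ℚ}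
    (h : ∀ (K : Type) [Field K] [CharZero K], ConicSolvable K a b ↔ ConicSolvable K c d) :
    LocallySolvable a b ↔ LocallySolvable c d :=
  and_congr (h ℝ) (forall_congr' fun p => forall_congr' fun _ => h ℚ_[p])

theorem conicSolvable_of_isUnit {a b : ℤ} (ha : IsUnit a) (hb : IsUnit b)
    (h : ConicSolvable ℝ a b) : ConicSolvable ℚ a b := by
  rcases Int.isUnit_iff.1 ha with rfl | rfl
  · exact ⟨1, 0, by norm_num⟩
  rcases Int.isUnit_iff.1 hb with rfl | rfl
  · exact ⟨0, 1, by norm_num⟩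
  obtain ⟨x, y, hxy⟩ := h
  push_cast at hxy
  nlinarith [sq_nonneg x, sq_nonneg y]

theorem Int.legendre_descent_step {a b : ℤ} (hb : Squarefree b) (hab : a.natAbs ≤ b.natAbs)
    (hb1 : 1 < b.natAbs) (hsq : ∀ p : ℕ, p.Prime → p ∣ b.natAbs → IsSquare (a : ZMod p)) :
    IsSquare a ∨ ∃ c : ℤ, Squarefree c ∧ c.natAbs < b.natAbs ∧
      ∀ (K : Type) [Field K] [CharZero K], ConicSolvable K a b ↔ ConicSolvable K a c := by
  obtain ⟨t, ⟨b', hb'⟩, ht⟩ := exists_dvd_sq_sub_of_isSquare hb.ne_zero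
    (ZMod.isSquare_intCast_of_squarefree (squarefree_natAbs.2 hb) a hsq)
  rcases eq_or_ne b' 0 with rfl | hb'0
  · exact .inl ⟨t, by linear_combination -hb'⟩
  obtain ⟨c, k, rfl, hc⟩ := sq_mul_squarefree b'
  have hk : k ≠ 0 := by rintro rfl; simp at hb'0
  refine .inr ⟨c, hc, ?_, fun K _ _ => ?_⟩
  · have hlt : |k ^ 2 * c| < |b| := abs_lt_of_mul_eq_sq_sub (a := a) (t := t)
      (by linear_combination -hb') ht (by simp only [abs_eq_natAbs]; omega)
      (by simp only [abs_eq_natAbs]; omega)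
    have hck := natAbs_le_of_dvd_ne_zero (dvd_mul_left c (k ^ 2)) hb'0
    simp only [abs_eq_natAbs] at hlt
    omega
  · rw [conicSolvable_iff_of_mul_eq_sq_sub (b' := (c : K) * (k : K) ^ 2) (t := (t : K))
      two_ne_zero (by exact_mod_cast hb.ne_zero)
      (by exact_mod_cast mul_ne_zero hc.ne_zero (pow_ne_zero 2 hk)) ?_,
      conicSolvable_mul_sq_right (by exact_mod_cast hk)]
    exact_mod_cast (by linear_combination -hb' : b * (c * k ^ 2) = t ^ 2 - a)

theorem conicSolvable_of_locallySolvable {a b : ℤ} (ha : Squarefree a) (hb : Squarefree b)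
    (h : LocallySolvable a b) : ConicSolvable ℚ a b := by
  induction hn : a.natAbs + b.natAbs using Nat.strong_induction_on generalizing a b with
  | _ n ih =>
  wlog hab : a.natAbs ≤ b.natAbs generalizing a b
  · rw [conicSolvable_comm]
    exact this hb ha ((LocallySolvable.congr fun K _ _ => conicSolvable_comm).1 h) (by omega)
      (by omega)
  rcases le_or_gt b.natAbs 1 with hb1 | hb1
  · exact conicSolvable_of_isUnit (Int.isUnit_iff_natAbs_eq.2 (by have := ha.ne_zero; omega))
      (Int.isUnit_iff_natAbs_eq.2 (by have := hb.ne_zero; omega)) (by simpa using h.1)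
  have hsq (p : ℕ) (hp : p.Prime) (hpb : p ∣ b.natAbs) : IsSquare (a : ZMod p) := by
    have : Fact p.Prime := ⟨hp⟩
    refine isSquare_intCast_zmod_of_conicSolvable_padic (Int.natCast_dvd.2 hpb) (fun hp2 => ?_)
      (by simpa using h.2 p)
    exact (Nat.prime_iff_prime_int.1 hp).not_isUnit (hb _ (by rwa [← sq]))
  rcases Int.legendre_descent_step hb hab hb1 hsq with ⟨r, rfl⟩ | ⟨c, hc, hcb, key⟩
  · exact conicSolvable_of_isSquare (by exact_mod_cast ha.ne_zero) ⟨r, by push_cast; rfl⟩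
  have key' (K : Type) [Field K] [CharZero K] :
      ConicSolvable K (a : ℚ) (b : ℚ) ↔ ConicSolvable K (a : ℚ) (c : ℚ) := by
    simpa using key K
  exact (key ℚ).2 (ih _ (by omega) ha hc ((LocallySolvable.congr key').1 h) rfl)

/-- Hasse–Minkowski for conics: for `a, b ∈ ℚˣ`, the equation `a x² + b y² = 1`
has a rational solution iff it has a solution in `ℝ` and in `ℚ_p` for every
prime `p`. -/
theorem hasse_minkowski_conic (a b : ℚ) (ha : a ≠ 0) (hb : b ≠ 0) :
    (∃ x y : ℚ, a * x ^ 2 + b * y ^ 2 = 1) ↔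
    ((∃ x y : ℝ, (a : ℝ) * x ^ 2 + (b : ℝ) * y ^ 2 = 1) ∧
     ∀ (p : ℕ) [Fact p.Prime],
       ∃ x y : ℚ_[p], (a : ℚ_[p]) * x ^ 2 + (b : ℚ_[p]) * y ^ 2 = 1) := by
  refine ⟨fun h => ⟨ConicSolvable.map (Rat.castHom ℝ) h,
    fun p _ => ConicSolvable.map (Rat.castHom ℚ_[p]) h⟩, fun h => ?_⟩
  obtain ⟨a₀, r, ha₀, hr, rfl⟩ := Rat.exists_squarefree_mul_sq ha
  obtain ⟨b₀, s, hb₀, hs, rfl⟩ := Rat.exists_squarefree_mul_sq hb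
  have key : ∀ (K : Type) [Field K] [CharZero K],
      ConicSolvable K (a₀ * r ^ 2 : ℚ) (b₀ * s ^ 2 : ℚ) ↔ ConicSolvable K (a₀ : ℚ) (b₀ : ℚ) := by
    intro K _ _
    push_cast
    exact conicSolvable_mul_sq (by exact_mod_cast hr) (by exact_mod_cast hs)
  have hQ := (key ℚ).2 (conicSolvable_of_locallySolvable ha₀ hb₀ ((LocallySolvable.congr key).1 h))
  simp only [Rat.cast_id] at hQ
  exact hQ
end

section
/- (von Staudt–Clausen, integrality form) For every even integer k > 0, the number B_k + ∑_{(l−1) | k} 1/l is an integer, where B_k is the k-th Bernoulli number and the sum runs over the primes l with (l−1) dividing k. -/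
theorem von_staudt_clausen_general (k : ℕ) (hke : Even k) :
    ∃ z : ℤ,
      bernoulli k +
        ∑ l ∈ (Finset.range (k + 2)).filter (fun l => l.Prime ∧ (l - 1) ∣ k),
          (1 : ℚ) / l = (z : ℚ) := by
  obtain ⟨m, rfl⟩ := hke
  obtain ⟨z, hz⟩ := Bernoulli.vonStaudt_clausen m
  exact ⟨z, by rw [← two_mul, ← hz]⟩

/-- von Staudt–Clausen (integrality form): for every even `k > 0`, the number
`B_k + ∑ 1/l`, summed over primes `l` with `(l-1) ∣ k`, is an integer. -/
theorem von_staudt_clausen (k : ℕ) (hk : 0 < k) (hke : Even k) :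
    ∃ z : ℤ,
      bernoulli k +
        ∑ l ∈ (Finset.range (k + 2)).filter (fun l => l.Prime ∧ (l - 1) ∣ k),
          (1 : ℚ) / l = (z : ℚ) :=
  von_staudt_clausen_general k hke
end

section
/- For an integer n > 1, if the identity (T + 1)^n = T^n + 1 holds in the polynomial ring (ℤ/nℤ)[T], then n is prime. -/
/-!
Let `p` be the least prime factor of a composite `n`. Comparing coefficients of `T ^ p` gives
`n ∣ choose n p`. Since `p * choose n p = n * choose (n - 1) (p - 1)`, this forces
`p ∣ choose (n - 1) (p - 1)`; but by Lucas's theorem that coefficient is `1` modulo `p`, because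
`n - 1` ends in the base-`p` digit `p - 1`.
-/

open Polynomial

theorem Polynomial.natCast_choose_eq_zero_of_X_add_one_pow_eq {R : Type*} [Semiring R] {n k : ℕ}
    (h : (X + 1 : R[X]) ^ n = X ^ n + 1) (hk₀ : 0 < k) (hkn : k < n) :
    (n.choose k : R) = 0 := by
  simpa [coeff_X_add_one_pow, coeff_X_pow, coeff_one, hkn.ne, hk₀.ne'] using
    congrArg (coeff · k) h

namespace Nat

theorem choose_pred_pred_modEq_one {n p : ℕ} (hp : p.Prime) (hpn : p ∣ n) (hn : n ≠ 0) :
    (n - 1).choose (p - 1) ≡ 1 [MOD p] := by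
  have := Fact.mk hp
  obtain ⟨m, rfl⟩ := hpn
  have hp₁ : p - 1 < p := Nat.sub_one_lt hp.ne_zero
  obtain ⟨m, rfl⟩ := Nat.exists_eq_succ_of_ne_zero (right_ne_zero_of_mul hn)
  have hm : p * (m + 1) - 1 = (p - 1) + p * m := by
    rw [Nat.mul_succ]; have := hp.pos; omega
  have lucas := Choose.choose_modEq_choose_mod_mul_choose_div_nat (p := p) (n := p - 1 + p * m)
    (k := p - 1)
  rw [hm]
  rwa [Nat.add_mul_mod_self_left, Nat.add_mul_div_left _ _ hp.pos, Nat.mod_eq_of_lt hp₁,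
    Nat.div_eq_of_lt hp₁, Nat.choose_self, Nat.choose_zero_right, mul_one] at lucas

theorem not_dvd_choose_of_prime_dvd {n p : ℕ} (hp : p.Prime) (hpn : p ∣ n) (hn : n ≠ 0) :
    ¬ n ∣ n.choose p := by
  intro hdvd
  have absorb : n * (n - 1).choose (p - 1) = n.choose p * p := by
    simpa [Nat.sub_add_cancel (Nat.pos_of_ne_zero hn), Nat.sub_add_cancel hp.pos] using
      Nat.add_one_mul_choose_eq (n - 1) (p - 1)
  have hp_dvd : p ∣ (n - 1).choose (p - 1) :=
    Nat.dvd_of_mul_dvd_mul_left (Nat.pos_of_ne_zero hn) (absorb ▸ Nat.mul_dvd_mul_right hdvd p)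
  have := (Nat.modEq_zero_iff_dvd.mpr hp_dvd).symm.trans (choose_pred_pred_modEq_one hp hpn hn)
  exact absurd (this.eq_of_lt_of_lt hp.pos hp.one_lt) zero_ne_one

end Nat

open Polynomial in
/-- If `(T + 1)^n = T^n + 1` in `(ℤ/nℤ)[T]` for some `n > 1`, then `n` is prime. -/
theorem prime_of_freshman_dream (n : ℕ) (hn : 1 < n)
    (h : (X + 1 : Polynomial (ZMod n)) ^ n = X ^ n + 1) : n.Prime := by
  by_contra hnp
  have hp : n.minFac.Prime := Nat.minFac_prime hn.ne'
  have hpn : n.minFac < n := (Nat.not_prime_iff_minFac_lt hn).mp hnp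
  have hdvd : n ∣ n.choose n.minFac := (ZMod.natCast_eq_zero_iff _ _).mp
    (natCast_choose_eq_zero_of_X_add_one_pow_eq h hp.pos hpn)
  exact Nat.not_dvd_choose_of_prime_dvd hp n.minFac_dvd (by omega) hdvd
end
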